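/- arXiv:2404.17085 — 2 statements merged into one kernel-verified Lean document; each statement's English description precedes it below -/
import Mathlib

section
/- Let (Θ,w) be a weighted complex unit gain cycle C_n on n vertices. Then det(L(Θ,w)) = 0 if and only if C_n is balanced, i.e., the product of the gains around the cycle equals 1. -/
open Matrix Complex BigOperators

/-- Laplacian of a weighted complex unit gain cycle on `n` vertices (`n ≥ 3`, enforced via
`[NeZero n]` plus a `3 ≤ n` hypothesis in the theorems), where the oriented edge `i` goes
from vertex `i` to vertex `i+1` (indices mod `n`), carries gain `φ i` and weight `w i`. -/
noncomputable def cycleLap (n : ℕ) [NeZero n] (φ : Fin n → ℂ) (w : Fin n → ℝ) :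
    Matrix (Fin n) (Fin n) ℂ := fun i j =>
  if i = j then ((w (i - 1) + w i : ℝ) : ℂ)
  else if j = i + 1 then -(φ i * (w i : ℂ))
  else if i = j + 1 then -((φ j)⁻¹ * (w j : ℂ))
  else 0

/-- Weighted incidence matrix of a weighted complex unit gain cycle on `n` vertices:
rows indexed by vertices, columns by the oriented edges `e : Fin n` (edge `e` goes from
vertex `e` to vertex `e+1`). -/
noncomputable def cycleInc (n : ℕ) [NeZero n] (φ : Fin n → ℂ) (w : Fin n → ℝ) :
    Matrix (Fin n) (Fin n) ℂ := fun v e =>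
  if v = e then (Real.sqrt (w e) : ℂ)
  else if v = e + 1 then -(φ e)⁻¹ * (Real.sqrt (w e) : ℂ)
  else 0

open Fin.NatCast Fin.CommRing in
/-- A permutation of `Fin n` that moves every point by `0` or `1` is the identity or
the full rotation. -/
lemma perm_eq_one_or_rotate {n : ℕ} [NeZero n] (h1 : (1 : Fin n) ≠ 0)
    (σ : Equiv.Perm (Fin n)) (h : ∀ e, σ e = e ∨ σ e = e + 1) :
    σ = 1 ∨ ∀ e, σ e = e + 1 := by
  by_cases h0 : ∀ e, σ e = e
  · left; ext e; simp [h0]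
  right
  push_neg at h0
  obtain ⟨e₀, he₀⟩ := h0
  have he₀' : σ e₀ = e₀ + 1 := (h e₀).resolve_left he₀
  have key : ∀ k : ℕ, σ (e₀ + (k : Fin n)) = e₀ + (k : Fin n) + 1 := by
    intro k
    induction k with
    | zero => simpa using he₀'
    | succ k ih =>
      have hc : (((k : ℕ) + 1 : ℕ) : Fin n) = (k : Fin n) + 1 := by push_cast; ring
      rw [hc, ← add_assoc]
      rcases h (e₀ + (k : Fin n) + 1) with h' | h'
      · exfalso
        have heq : e₀ + (k : Fin n) = e₀ + (k : Fin n) + 1 := σ.injective (by rw [ih, h'])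
        exact h1 (add_eq_left.mp heq.symm)
      · exact h'
  intro j
  have := key ((j - e₀ : Fin n)).val
  rwa [Fin.cast_val_eq_self, add_sub_cancel] at this

open Fin.CommRing in
lemma cycleLap_eq_mul {n : ℕ} [NeZero n] (hn : 3 ≤ n)
    (φ : Fin n → ℂ) (w : Fin n → ℝ) (hφ : ∀ i, ‖φ i‖ = 1)
    (hw : ∀ i, 0 ≤ w i) :
    cycleLap n φ w = cycleInc n φ w * (cycleInc n φ w)ᴴ := by
  have h1 : (1 : Fin n) ≠ 0 := by
    simp [Fin.ext_iff, Fin.val_one', Nat.mod_eq_of_lt (by omega : 1 < n)]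
  have h2 : (1 : Fin n) + 1 ≠ 0 := by
    simp [Fin.ext_iff, Fin.add_def, Fin.val_one', Nat.mod_eq_of_lt (by omega : 1 < n),
      Nat.mod_eq_of_lt (by omega : 2 < n)]
  have hconj : ∀ i, (starRingEnd ℂ) (φ i) = (φ i)⁻¹ := fun i =>
    (Complex.inv_eq_conj (by simpa using hφ i)).symm
  have hφne : ∀ i, φ i ≠ 0 := by
    intro i hz
    have := hφ i; rw [hz] at this; simp at this
  have hsq : ∀ e, ((Real.sqrt (w e) : ℝ) : ℂ) * ((Real.sqrt (w e) : ℝ) : ℂ) = ((w e : ℝ) : ℂ) := by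
    intro e
    rw [← Complex.ofReal_mul, Real.mul_self_sqrt (hw e)]
  have hstar : ∀ j e, (cycleInc n φ w)ᴴ e j =
      if j = e then ((Real.sqrt (w e) : ℝ) : ℂ)
      else if j = e + 1 then -(φ e) * ((Real.sqrt (w e) : ℝ) : ℂ) else 0 := by
    intro j e
    simp only [Matrix.conjTranspose_apply, cycleInc]
    split_ifs <;> simp [hconj, Complex.conj_ofReal]
  funext i j
  rw [Matrix.mul_apply]
  have hzero : ∀ e ∈ Finset.univ, e ∉ ({i - 1, i} : Finset (Fin n)) →
      cycleInc n φ w i e * (cycleInc n φ w)ᴴ e j = 0 := by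
    intro e _ he
    simp only [Finset.mem_insert, Finset.mem_singleton] at he
    push_neg at he
    have hie : i ≠ e := fun h => he.2 h.symm
    have hie1 : i ≠ e + 1 := by
      intro h
      apply he.1
      rw [h]; ring
    simp [cycleInc, hie, hie1]
  rw [← Finset.sum_subset (Finset.subset_univ _) hzero]
  have hne : (i - 1 : Fin n) ≠ i := by
    intro h
    exact h1 (by simpa using sub_eq_self.mp h)
  rw [Finset.sum_insert (by simpa using hne), Finset.sum_singleton]
  have hi1 : i = (i - 1) + 1 := by ring
  have hii1 : i ≠ i + 1 := fun h => h1 (left_eq_add.mp h)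
  have h11 : i + 1 ≠ i - 1 := by
    intro h
    apply h2
    have : (1 : Fin n) + 1 = i - i := by rw [← sub_eq_zero] at h ⊢; rw [← h]; ring
    simpa using this
  have r1 : cycleInc n φ w i (i - 1) = -(φ (i - 1))⁻¹ * ((Real.sqrt (w (i - 1)) : ℝ) : ℂ) := by
    simp only [cycleInc]
    rw [if_neg hne.symm, if_pos hi1]
  have r2 : cycleInc n φ w i i = ((Real.sqrt (w i) : ℝ) : ℂ) := by
    simp [cycleInc]
  rw [r1, r2, hstar, hstar]
  simp only [cycleLap]
  by_cases hij : i = j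
  · subst hij
    rw [if_pos rfl, if_neg hne.symm, if_pos hi1, if_pos rfl]
    rw [Complex.ofReal_add, ← hsq (i - 1), ← hsq i]
    field_simp [hφne]
  · have hji : j ≠ i := fun h => hij h.symm
    rw [if_neg hij]
    by_cases hj1 : j = i + 1
    · have hj2 : j ≠ i - 1 := by rw [hj1]; exact h11
      have hj3 : j ≠ i - 1 + 1 := by rw [← hi1, hj1]; exact Ne.symm hii1
      rw [if_pos hj1, if_neg hj2, if_neg hj3, if_neg hji, if_pos hj1]
      rw [mul_zero, zero_add, ← hsq i]
      ring
    · rw [if_neg hj1]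
      by_cases hi2 : i = j + 1
      · have hjm : j = i - 1 := by rw [hi2]; ring
        rw [if_pos hi2, if_pos hjm, if_neg hji, if_neg hj1]
        rw [mul_zero, add_zero, hjm, ← hsq (i - 1)]
        ring
      · have hjm : j ≠ i - 1 := fun h => hi2 (by rw [h]; exact hi1)
        have hj3 : j ≠ i - 1 + 1 := by rw [← hi1]; exact hji
        rw [if_neg hi2, if_neg hjm, if_neg hj3, if_neg hji, if_neg hj1]
        simp

lemma det_cycleInc {n : ℕ} [NeZero n] (hn : 3 ≤ n)
    (φ : Fin n → ℂ) (w : Fin n → ℝ) :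
    (cycleInc n φ w).det =
      (∏ e, ((Real.sqrt (w e) : ℝ) : ℂ)) * (1 - (∏ e, φ e)⁻¹) := by
  obtain ⟨m, rfl⟩ : ∃ m, n = m + 3 := ⟨n - 3, by omega⟩
  have h1 : (1 : Fin (m + 3)) ≠ 0 := by
    simp [Fin.ext_iff, Fin.val_one', Nat.mod_eq_of_lt (by omega : 1 < m + 3)]
  set c : Equiv.Perm (Fin (m + 3)) := finRotate (m + 3) with hc
  have hcapp : ∀ e, c e = e + 1 := fun e => finRotate_succ_apply e
  have hone_ne : (1 : Equiv.Perm (Fin (m + 3))) ≠ c := by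
    intro h
    have : (0 : Fin (m + 3)) = 0 + 1 := by
      conv_lhs => rw [show (0 : Fin (m+3)) = (1 : Equiv.Perm (Fin (m+3))) 0 from rfl, h, hcapp]
    exact h1 (by simpa using this.symm)
  rw [Matrix.det_apply]
  have hzero : ∀ σ ∈ Finset.univ, σ ∉ ({1, c} : Finset (Equiv.Perm (Fin (m + 3)))) →
      Equiv.Perm.sign σ • ∏ e, cycleInc (m + 3) φ w (σ e) e = 0 := by
    intro σ _ hσ
    simp only [Finset.mem_insert, Finset.mem_singleton] at hσ
    push_neg at hσ
    have : ¬ ∀ e, σ e = e ∨ σ e = e + 1 := by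
      intro h
      rcases perm_eq_one_or_rotate h1 σ h with h' | h'
      · exact hσ.1 h'
      · exact hσ.2 (by ext e; rw [h' e, hcapp])
    push_neg at this
    obtain ⟨e, he1, he2⟩ := this
    rw [Finset.prod_eq_zero (Finset.mem_univ e) (by simp [cycleInc, he1, he2]), smul_zero]
  rw [← Finset.sum_subset (Finset.subset_univ _) hzero,
    Finset.sum_insert (by simpa using hone_ne), Finset.sum_singleton]
  have hterm1 : Equiv.Perm.sign (1 : Equiv.Perm (Fin (m + 3))) •
      ∏ e, cycleInc (m + 3) φ w ((1 : Equiv.Perm (Fin (m+3))) e) e =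
      ∏ e, ((Real.sqrt (w e) : ℝ) : ℂ) := by
    simp [cycleInc]
  have hstep : ∀ e : Fin (m + 3), cycleInc (m + 3) φ w (e + 1) e =
      (-1) * ((φ e)⁻¹ * ((Real.sqrt (w e) : ℝ) : ℂ)) := by
    intro e
    have : e + 1 ≠ e := fun h => h1 (by simpa using (add_eq_left.mp h))
    simp [cycleInc, this]
  have hterm2 : Equiv.Perm.sign c • ∏ e, cycleInc (m + 3) φ w (c e) e =
      -((∏ e, φ e)⁻¹ * ∏ e, ((Real.sqrt (w e) : ℝ) : ℂ)) := by
    have hsign : Equiv.Perm.sign c = (-1) ^ (m + 2) := sign_finRotate (m + 3)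
    have hprod : ∏ e, cycleInc (m + 3) φ w (c e) e =
        (-1 : ℂ) ^ (m + 3) * ((∏ e, φ e)⁻¹ * ∏ e, ((Real.sqrt (w e) : ℝ) : ℂ)) := by
      simp only [hcapp, hstep]
      rw [Finset.prod_mul_distrib, Finset.prod_mul_distrib, Finset.prod_const,
        Finset.card_univ, Fintype.card_fin, Finset.prod_inv_distrib]
    have hsgn : (((Equiv.Perm.sign c : ℤˣ) : ℤ) : ℂ) = (-1) ^ (m + 2) := by
      rw [hsign]; push_cast; ring
    have hcomb : ((-1 : ℂ)) ^ (m + 2) * (-1 : ℂ) ^ (m + 3) = -1 := by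
      rw [pow_succ (-1 : ℂ) (m + 2), ← mul_assoc, ← pow_add,
        Even.neg_one_pow ⟨m + 2, by ring⟩, one_mul]
    rw [hprod, Units.smul_def, zsmul_eq_mul, hsgn, ← mul_assoc, hcomb]
    ring
  rw [hterm1, hterm2]; ring

/-- The Laplacian of a weighted complex unit gain cycle has determinant zero
iff the cycle is balanced, i.e. the product of the gains around the cycle equals 1. -/
theorem det_cycleLap_eq_zero_iff_balanced {n : ℕ} [NeZero n] (hn : 3 ≤ n)
    (φ : Fin n → ℂ) (w : Fin n → ℝ)
    (hφ : ∀ i, ‖φ i‖ = 1) (hw : ∀ i, 0 < w i) :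
    (cycleLap n φ w).det = 0 ↔ (∏ i, φ i) = 1 := by
  rw [cycleLap_eq_mul hn φ w hφ (fun i => (hw i).le), Matrix.det_mul,
    Matrix.det_conjTranspose, det_cycleInc hn]
  have hP : (∏ e, ((Real.sqrt (w e) : ℝ) : ℂ)) ≠ 0 := by
    rw [Finset.prod_ne_zero_iff]
    intro e _
    simp [Real.sqrt_eq_zero (hw e).le, (hw e).ne']
  constructor
  · intro h
    rcases mul_eq_zero.mp h with h | h
    · rcases mul_eq_zero.mp h with h | h
      · exact absurd h hP
      · have := sub_eq_zero.mp h
        exact inv_eq_one.mp this.symm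
    · rw [star_eq_zero] at h
      rcases mul_eq_zero.mp h with h | h
      · exact absurd h hP
      · have := sub_eq_zero.mp h
        exact inv_eq_one.mp this.symm
  · intro h
    rw [h]
    simp
end

section
/- Let Θ = (Σ,φ) be a connected complex unit gain graph on n vertices. If Θ is balanced then its gain distance Laplacian matrices have rank n − 1; if Θ is unbalanced then they have rank n. -/
open Matrix Complex BigOperators

/-- The gain of a walk in a complex unit gain graph: the product of the gains of its
edges in order. -/
def walkGain {n : ℕ} {G : SimpleGraph (Fin n)} (φ : Fin n → Fin n → ℂ) :
    {u v : Fin n} → G.Walk u v → ℂ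
  | _, _, SimpleGraph.Walk.nil => 1
  | u, _, SimpleGraph.Walk.cons (v := x) _ p => φ u x * walkGain φ p

/-- A complex unit gain graph is balanced if every cycle has gain 1. -/
def IsBalanced {n : ℕ} (G : SimpleGraph (Fin n)) (φ : Fin n → Fin n → ℂ) : Prop :=
  ∀ (u : Fin n) (c : G.Walk u u), c.IsCycle → walkGain φ c = 1

/-- The lexicographically maximal gain (first maximizing the real part, then the
imaginary part) among the gains of all shortest paths from `u` to `v`. -/
noncomputable def phiMaxAux {n : ℕ} (G : SimpleGraph (Fin n)) (φ : Fin n → Fin n → ℂ)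
    (u v : Fin n) : ℂ :=
  let S : Set ℂ := {z | ∃ p : G.Walk u v, p.length = G.dist u v ∧ z = walkGain φ p}
  { re := sSup (Complex.re '' S),
    im := sSup (Complex.im '' {z ∈ S | z.re = sSup (Complex.re '' S)}) }

/-- The lexicographically minimal gain among the gains of all shortest paths. -/
noncomputable def phiMinAux {n : ℕ} (G : SimpleGraph (Fin n)) (φ : Fin n → Fin n → ℂ)
    (u v : Fin n) : ℂ :=
  let S : Set ℂ := {z | ∃ p : G.Walk u v, p.length = G.dist u v ∧ z = walkGain φ p}
  { re := sInf (Complex.re '' S),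
    im := sInf (Complex.im '' {z ∈ S | z.re = sInf (Complex.re '' S)}) }

/-- Maximum auxiliary gain `φ^max_<` for the standard ordering of `Fin n`. -/
noncomputable def phiMax {n : ℕ} (G : SimpleGraph (Fin n)) (φ : Fin n → Fin n → ℂ)
    (u v : Fin n) : ℂ :=
  if u = v then 0
  else if u < v then phiMaxAux G φ u v
  else (starRingEnd ℂ) (phiMaxAux G φ v u)

/-- Minimum auxiliary gain `φ^min_<` for the standard ordering of `Fin n`. -/
noncomputable def phiMin {n : ℕ} (G : SimpleGraph (Fin n)) (φ : Fin n → Fin n → ℂ)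
    (u v : Fin n) : ℂ :=
  if u = v then 0
  else if u < v then phiMinAux G φ u v
  else (starRingEnd ℂ) (phiMinAux G φ v u)

/-- The maximum gain distance matrix `D^max_<`. -/
noncomputable def Dmax {n : ℕ} (G : SimpleGraph (Fin n)) (φ : Fin n → Fin n → ℂ) :
    Matrix (Fin n) (Fin n) ℂ :=
  fun s t => phiMax G φ s t * (G.dist s t : ℂ)

/-- The minimum gain distance matrix `D^min_<`. -/
noncomputable def Dmin {n : ℕ} (G : SimpleGraph (Fin n)) (φ : Fin n → Fin n → ℂ) :
    Matrix (Fin n) (Fin n) ℂ :=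
  fun s t => phiMin G φ s t * (G.dist s t : ℂ)

/-- The diagonal transmission matrix `Tr(Σ)`, with `tr(v) = Σ_u d(v,u)`. -/
noncomputable def TrM {n : ℕ} (G : SimpleGraph (Fin n)) : Matrix (Fin n) (Fin n) ℂ :=
  Matrix.diagonal (fun v => ((∑ u, G.dist v u : ℕ) : ℂ))

/-- The maximum gain distance Laplacian `DL^max_< = Tr(Σ) − D^max_<`. -/
noncomputable def DLmax {n : ℕ} (G : SimpleGraph (Fin n)) (φ : Fin n → Fin n → ℂ) :
    Matrix (Fin n) (Fin n) ℂ := TrM G - Dmax G φ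

/-- The minimum gain distance Laplacian `DL^min_< = Tr(Σ) − D^min_<`. -/
noncomputable def DLmin {n : ℕ} (G : SimpleGraph (Fin n)) (φ : Fin n → Fin n → ℂ) :
    Matrix (Fin n) (Fin n) ℂ := TrM G - Dmin G φ

/-- The maximum distance incidence matrix `DH^max_<`: rows indexed by vertices, columns by
pairs `j < k` (oriented from `j` to `k`). -/
noncomputable def DHmax {n : ℕ} (G : SimpleGraph (Fin n)) (φ : Fin n → Fin n → ℂ) :
    Matrix (Fin n) {p : Fin n × Fin n // p.1 < p.2} ℂ := fun v e =>
  if v = e.1.1 then (Real.sqrt (G.dist e.1.1 e.1.2) : ℂ)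
  else if v = e.1.2 then -(phiMax G φ e.1.1 e.1.2)⁻¹ * (Real.sqrt (G.dist e.1.1 e.1.2) : ℂ)
  else 0

/-! ### Auxiliary lemmas -/

section Aux

variable {n : ℕ} {G : SimpleGraph (Fin n)} {φ : Fin n → Fin n → ℂ}

lemma walkGain_append (φ : Fin n → Fin n → ℂ)
    {u v w : Fin n} (p : G.Walk u v) (q : G.Walk v w) :
    walkGain φ (p.append q) = walkGain φ p * walkGain φ q := by
  induction p with
  | nil => simp [walkGain]
  | cons h p ih => simp [walkGain, ih, mul_assoc]

lemma abs_walkGain (hφ1 : ∀ i j, G.Adj i j → ‖φ i j‖ = 1)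
    {u v : Fin n} (p : G.Walk u v) : ‖walkGain φ p‖ = 1 := by
  induction p with
  | nil => simp [walkGain]
  | cons h p ih => simp [walkGain, norm_mul, hφ1 _ _ h, ih]

lemma walkGain_reverse (hφ1 : ∀ i j, G.Adj i j → ‖φ i j‖ = 1)
    (hφ2 : ∀ i j, G.Adj i j → φ j i = (φ i j)⁻¹)
    {u v : Fin n} (p : G.Walk u v) :
    walkGain φ p.reverse = (starRingEnd ℂ) (walkGain φ p) := by
  induction p with
  | nil => simp [walkGain]
  | @cons u x v h p ih =>
      rw [SimpleGraph.Walk.reverse_cons, walkGain_append, ih]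
      simp only [walkGain, _root_.map_mul, mul_one]
      rw [hφ2 _ _ h, Complex.inv_def]
      have : ‖φ u x‖ = 1 := hφ1 _ _ h
      simp [Complex.normSq_eq_norm_sq, this, mul_comm]

lemma path_eq_cons_nil {x u : Fin n} (p : G.Walk x u)
    (hp : p.IsPath) (hux : u ≠ x) (he : s(u,x) ∈ p.edges) :
    ∃ h' : G.Adj x u, p = SimpleGraph.Walk.cons h' SimpleGraph.Walk.nil := by
  cases p with
  | nil => simp at he
  | @cons _ y _ h' q =>
    rw [SimpleGraph.Walk.edges_cons, List.mem_cons] at he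
    rcases he with he | he
    · have hy : y = u := by
        rcases Sym2.eq_iff.mp he with ⟨h1, _⟩ | ⟨h1, _⟩
        · exact absurd h1 hux
        · exact h1.symm
      subst hy
      have hq : q = SimpleGraph.Walk.nil :=
        (SimpleGraph.Walk.isPath_iff_eq_nil).mp hp.of_cons
      exact ⟨h', by rw [hq]⟩
    · exfalso
      have hxs : x ∈ q.support := SimpleGraph.Walk.snd_mem_support_of_mem_edges q he
      have := hp.support_nodup
      rw [SimpleGraph.Walk.support_cons, List.nodup_cons] at this
      exact this.1 hxs

lemma closedWalkGain (hφ1 : ∀ i j, G.Adj i j → ‖φ i j‖ = 1)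
    (hφ2 : ∀ i j, G.Adj i j → φ j i = (φ i j)⁻¹)
    (hbal : IsBalanced G φ) :
    ∀ (m : ℕ) (u : Fin n) (w : G.Walk u u), w.length = m → walkGain φ w = 1 := by
  intro m
  induction m using Nat.strong_induction_on with
  | _ m ih =>
    intro u w hlen
    cases w with
    | nil => simp [walkGain]
    | @cons _ x _ h p =>
      by_cases hnd : p.support.Nodup
      · have hp : p.IsPath := (SimpleGraph.Walk.isPath_def p).mpr hnd
        by_cases he : s(u,x) ∈ p.edges
        · obtain ⟨h', rfl⟩ := path_eq_cons_nil p hp h.ne he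
          have h1 : φ u x ≠ 0 := by
            intro h0; have := hφ1 _ _ h; rw [h0] at this; simp at this
          have h2 : φ x u = (φ u x)⁻¹ := hφ2 u x h
          simp [walkGain, h2, mul_inv_cancel₀ h1]
        · exact hbal u (SimpleGraph.Walk.cons h p)
            ((SimpleGraph.Walk.cons_isCycle_iff p h).mpr ⟨hp, he⟩)
      · have hdup : ∃ a, 2 ≤ p.support.count a := by
          by_contra hcon
          push_neg at hcon
          exact hnd (List.nodup_iff_count_le_one.mpr (fun a => by have := hcon a; omega))
        obtain ⟨a, ha2⟩ := hdup
        have haS : a ∈ p.support := by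
          rw [← List.count_pos_iff]
          omega
        have hspec := SimpleGraph.Walk.take_spec p haS
        have hcount1 := SimpleGraph.Walk.count_support_takeUntil_eq_one p haS
        have hatail : a ∈ (p.dropUntil a haS).support.tail := by
          have : p.support.count a
              = (p.takeUntil a haS).support.count a
                + (p.dropUntil a haS).support.tail.count a := by
            rw [← List.count_append]
            congr 1
            rw [← SimpleGraph.Walk.support_append, hspec]
          rw [hcount1] at this
          have : 1 ≤ (p.dropUntil a haS).support.tail.count a := by omega
          exact List.one_le_count_iff.mp this
        cases hq2 : p.dropUntil a haS with
        | nil => rw [hq2] at hatail; simp at hatail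
        | @cons _ y _ h₂ r =>
          rw [hq2] at hatail
          rw [SimpleGraph.Walk.support_cons] at hatail
          simp only [List.tail_cons] at hatail
          have hr := SimpleGraph.Walk.take_spec r hatail
          set c := r.takeUntil a hatail with hc
          set d := r.dropUntil a hatail with hd
          have hp_eq : p = (p.takeUntil a haS).append
              (SimpleGraph.Walk.cons h₂ (c.append d)) := by
            rw [hr, ← hq2, hspec]
          have hl : m = (p.takeUntil a haS).length + c.length + d.length + 2 := by
            have hlp := congrArg SimpleGraph.Walk.length hp_eq
            simp only [SimpleGraph.Walk.length_append, SimpleGraph.Walk.length_cons] at hlp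
            rw [← hlen, SimpleGraph.Walk.length_cons]
            omega
          have g1 : walkGain φ (SimpleGraph.Walk.cons h₂ c) = 1 := by
            apply ih ((SimpleGraph.Walk.cons h₂ c).length) (by
              simp [SimpleGraph.Walk.length_cons]; omega) a _ rfl
          have g2 : walkGain φ (SimpleGraph.Walk.cons h ((p.takeUntil a haS).append d)) = 1 := by
            apply ih _ (by
              simp [SimpleGraph.Walk.length_cons, SimpleGraph.Walk.length_append]; omega) u _ rfl
          have hgp := congrArg (walkGain φ) hp_eq
          simp only [walkGain, walkGain_append] at hgp g1 g2 ⊢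
          rw [hgp]
          calc φ u x * (walkGain φ (p.takeUntil a haS) * (φ a y * (walkGain φ c * walkGain φ d)))
              = (φ a y * walkGain φ c)
                * (φ u x * (walkGain φ (p.takeUntil a haS) * walkGain φ d)) := by ring
            _ = 1 := by rw [g1, g2, one_mul]

/-- The set of gains of shortest walks. -/
def gainSet (G : SimpleGraph (Fin n)) (φ : Fin n → Fin n → ℂ) (u v : Fin n) : Set ℂ :=
  {z | ∃ p : G.Walk u v, p.length = G.dist u v ∧ z = walkGain φ p}

lemma lexSup_mem {S : Set ℂ} (hfin : S.Finite) (hne : S.Nonempty) :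
    (⟨sSup (Complex.re '' S), sSup (Complex.im '' {z ∈ S | z.re = sSup (Complex.re '' S)})⟩ : ℂ) ∈ S := by
  have h1 : sSup (Complex.re '' S) ∈ Complex.re '' S :=
    (hne.image _).csSup_mem (hfin.image _)
  obtain ⟨w, hwS, hwre⟩ := h1
  have hTne : {z ∈ S | z.re = sSup (Complex.re '' S)}.Nonempty := ⟨w, hwS, hwre⟩
  have hTfin : {z ∈ S | z.re = sSup (Complex.re '' S)}.Finite := hfin.subset (Set.sep_subset _ _)
  have h2 := (hTne.image Complex.im).csSup_mem (hTfin.image _)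
  obtain ⟨z, hzT, hzim⟩ := h2
  have heq : (⟨sSup (Complex.re '' S), sSup (Complex.im '' {z ∈ S | z.re = sSup (Complex.re '' S)})⟩ : ℂ) = z :=
    Complex.ext hzT.2.symm hzim.symm
  rw [heq]; exact hzT.1

lemma lexInf_mem {S : Set ℂ} (hfin : S.Finite) (hne : S.Nonempty) :
    (⟨sInf (Complex.re '' S), sInf (Complex.im '' {z ∈ S | z.re = sInf (Complex.re '' S)})⟩ : ℂ) ∈ S := by
  have h1 : sInf (Complex.re '' S) ∈ Complex.re '' S :=
    (hne.image _).csInf_mem (hfin.image _)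
  obtain ⟨w, hwS, hwre⟩ := h1
  have hTne : {z ∈ S | z.re = sInf (Complex.re '' S)}.Nonempty := ⟨w, hwS, hwre⟩
  have hTfin : {z ∈ S | z.re = sInf (Complex.re '' S)}.Finite := hfin.subset (Set.sep_subset _ _)
  have h2 := (hTne.image Complex.im).csInf_mem (hTfin.image _)
  obtain ⟨z, hzT, hzim⟩ := h2
  have heq : (⟨sInf (Complex.re '' S), sInf (Complex.im '' {z ∈ S | z.re = sInf (Complex.re '' S)})⟩ : ℂ) = z :=
    Complex.ext hzT.2.symm hzim.symm
  rw [heq]; exact hzT.1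

lemma gainSet_finite (G : SimpleGraph (Fin n)) (φ : Fin n → Fin n → ℂ) (u v : Fin n) :
    (gainSet G φ u v).Finite := by
  classical
  haveI : DecidableRel G.Adj := Classical.decRel _
  have : gainSet G φ u v ⊆
      Set.range (fun p : {p : G.Walk u v | p.length = G.dist u v} => walkGain φ p.1) := by
    rintro z ⟨p, hp, rfl⟩
    exact ⟨⟨p, hp⟩, rfl⟩
  exact (Set.finite_range _).subset this

lemma gainSet_nonempty (hconn : G.Connected) (u v : Fin n) :
    (gainSet G φ u v).Nonempty := by
  obtain ⟨p, hp⟩ := hconn.exists_walk_length_eq_dist u v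
  exact ⟨walkGain φ p, p, hp, rfl⟩

lemma phiMaxAux_mem (hconn : G.Connected) (u v : Fin n) :
    phiMaxAux G φ u v ∈ gainSet G φ u v :=
  lexSup_mem (gainSet_finite G φ u v) (gainSet_nonempty hconn u v)

lemma phiMinAux_mem (hconn : G.Connected) (u v : Fin n) :
    phiMinAux G φ u v ∈ gainSet G φ u v :=
  lexInf_mem (gainSet_finite G φ u v) (gainSet_nonempty hconn u v)

lemma normSq_eq_one_of_mem_gainSet (hφ1 : ∀ i j, G.Adj i j → ‖φ i j‖ = 1)
    {u v : Fin n} {z : ℂ} (hz : z ∈ gainSet G φ u v) : Complex.normSq z = 1 := by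
  obtain ⟨p, _, rfl⟩ := hz
  rw [Complex.normSq_eq_norm_sq, abs_walkGain hφ1]
  norm_num

lemma phiMaxAux_eq_of_singleton {u v : Fin n} {c : ℂ} (h : gainSet G φ u v = {c}) :
    phiMaxAux G φ u v = c := by
  have hm : phiMaxAux G φ u v ∈ gainSet G φ u v :=
    lexSup_mem (by rw [h]; exact Set.finite_singleton c)
      (by rw [h]; exact Set.singleton_nonempty c)
  rw [h] at hm
  exact hm

lemma phiMinAux_eq_of_singleton {u v : Fin n} {c : ℂ} (h : gainSet G φ u v = {c}) :
    phiMinAux G φ u v = c := by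
  have hm : phiMinAux G φ u v ∈ gainSet G φ u v :=
    lexInf_mem (by rw [h]; exact Set.finite_singleton c)
      (by rw [h]; exact Set.singleton_nonempty c)
  rw [h] at hm
  exact hm

lemma gainSet_adj {u v : Fin n} (h : G.Adj u v) :
    gainSet G φ u v = {φ u v} := by
  have hd : G.dist u v = 1 := SimpleGraph.dist_eq_one_iff_adj.mpr h
  ext z
  simp only [gainSet, Set.mem_setOf_eq, Set.mem_singleton_iff, hd]
  constructor
  · rintro ⟨p, hp, rfl⟩
    cases p with
    | nil => simp at hp
    | @cons _ y _ h' q =>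
      rw [SimpleGraph.Walk.length_cons] at hp
      have hq : q.length = 0 := by omega
      cases q with
      | nil => simp [walkGain]
      | cons _ _ => simp at hq
  · rintro rfl
    exact ⟨SimpleGraph.Walk.cons h SimpleGraph.Walk.nil, by simp, by simp [walkGain]⟩

end Aux

section Aux2

variable {n : ℕ} {G : SimpleGraph (Fin n)} {φ : Fin n → Fin n → ℂ}

lemma mul_conj_eq_one {z : ℂ} (h : ‖z‖ = 1) : z * (starRingEnd ℂ) z = 1 := by
  rw [Complex.mul_conj, Complex.normSq_eq_norm_sq, h]
  norm_num

lemma balanced_potential (hconn : G.Connected)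
    (hφ1 : ∀ i j, G.Adj i j → ‖φ i j‖ = 1)
    (hφ2 : ∀ i j, G.Adj i j → φ j i = (φ i j)⁻¹)
    (hbal : IsBalanced G φ) :
    ∃ η : Fin n → ℂ, (∀ v, ‖η v‖ = 1) ∧
      ∀ u v : Fin n, gainSet G φ u v = {(starRingEnd ℂ) (η u) * η v} := by
  obtain ⟨r⟩ := hconn.nonempty
  choose pth _ using fun v => hconn.exists_walk_length_eq_dist r v
  set η : Fin n → ℂ := fun v => walkGain φ (pth v) with hη
  have habs : ∀ v, ‖η v‖ = 1 := fun v => abs_walkGain hφ1 _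
  have key : ∀ (u v : Fin n) (q : G.Walk u v),
      walkGain φ q = (starRingEnd ℂ) (η u) * η v := by
    intro u v q
    have hC := closedWalkGain hφ1 hφ2 hbal _ r
      ((pth u).append (q.append (pth v).reverse)) rfl
    rw [walkGain_append, walkGain_append, walkGain_reverse hφ1 hφ2] at hC
    have h1 := mul_conj_eq_one (habs u)
    have h2 := mul_conj_eq_one (habs v)
    calc walkGain φ q
        = (η u * (starRingEnd ℂ) (η u)) * walkGain φ q
            * (η v * (starRingEnd ℂ) (η v)) := by rw [h1, h2]; ring
      _ = (starRingEnd ℂ) (η u)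
            * (η u * (walkGain φ q * (starRingEnd ℂ) (η v))) * η v := by ring
      _ = (starRingEnd ℂ) (η u) * η v := by rw [hC]; ring
  refine ⟨η, habs, fun u v => ?_⟩
  ext z
  simp only [gainSet, Set.mem_setOf_eq, Set.mem_singleton_iff]
  constructor
  · rintro ⟨p, _, rfl⟩
    exact key u v p
  · rintro rfl
    obtain ⟨p, hp⟩ := hconn.exists_walk_length_eq_dist u v
    exact ⟨p, hp, (key u v p).symm⟩

end Aux2

lemma master {n : ℕ} {G : SimpleGraph (Fin n)} {φ : Fin n → Fin n → ℂ}
    (hconn : G.Connected)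
    (hφ1 : ∀ i j, G.Adj i j → ‖φ i j‖ = 1)
    (hφ2 : ∀ i j, G.Adj i j → φ j i = (φ i j)⁻¹)
    (ψ : Fin n → Fin n → ℂ)
    (M : Matrix (Fin n) (Fin n) ℂ)
    (hM : ∀ s t, M s t = TrM G s t - ψ s t * (G.dist s t : ℂ))
    (hψc : ∀ u v, ψ v u = (starRingEnd ℂ) (ψ u v))
    (hψ1 : ∀ u v, u ≠ v → Complex.normSq (ψ u v) = 1)
    (hψadj : ∀ u v, G.Adj u v → u < v → ψ u v = φ u v)
    (hψbal : IsBalanced G φ → ∃ η : Fin n → ℂ, (∀ v, ‖η v‖ = 1) ∧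
        ∀ u v : Fin n, u < v → ψ u v = (starRingEnd ℂ) (η u) * η v) :
    (IsBalanced G φ → M.rank = n - 1) ∧ (¬ IsBalanced G φ → M.rank = n) := by
  have hnpos : 0 < n := Fin.pos_iff_nonempty.mpr hconn.nonempty
  -- the mulVec formula
  have hMv : ∀ (x : Fin n → ℂ) (j : Fin n), (M *ᵥ x) j
      = ∑ k, ((G.dist j k : ℂ) * x j - ψ j k * (G.dist j k : ℂ) * x k) := by
    intro x j
    have h0 : (M *ᵥ x) j = ∑ k, M j k * x k := by
      simp [Matrix.mulVec, dotProduct]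
    rw [h0]
    have h1 : ∀ k, M j k * x k
        = (if j = k then (((∑ u, G.dist j u : ℕ) : ℂ)) else 0) * x k
          - ψ j k * (G.dist j k : ℂ) * x k := by
      intro k
      rw [hM j k, TrM, Matrix.diagonal_apply]
      ring
    rw [Finset.sum_congr rfl (fun k _ => h1 k), Finset.sum_sub_distrib]
    have h2 : ∑ k, (if j = k then (((∑ u, G.dist j u : ℕ) : ℂ)) else 0) * x k
        = ∑ k, (G.dist j k : ℂ) * x j := by
      rw [Finset.sum_congr rfl (fun k _ => by rw [ite_mul, zero_mul])]
      rw [Finset.sum_ite_eq]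
      simp only [Finset.mem_univ, if_true]
      rw [Nat.cast_sum, Finset.sum_mul]
    rw [h2, ← Finset.sum_sub_distrib]
  -- kernel characterization
  have key : ∀ x : Fin n → ℂ, M *ᵥ x = 0 ↔ ∀ j k : Fin n, j < k → x j = ψ j k * x k := by
    intro x
    constructor
    · intro hx j k hjk
      have hDf : ∑ j, ∑ k, (starRingEnd ℂ) (x j)
          * ((G.dist j k : ℂ) * x j - ψ j k * (G.dist j k : ℂ) * x k) = 0 := by
        have h3 : ∀ j : Fin n, ∑ k, (starRingEnd ℂ) (x j)
            * ((G.dist j k : ℂ) * x j - ψ j k * (G.dist j k : ℂ) * x k)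
            = (starRingEnd ℂ) (x j) * (M *ᵥ x) j := by
          intro j
          rw [hMv, Finset.mul_sum]
        rw [Finset.sum_congr rfl (fun j _ => h3 j), hx]
        simp
      have hDfc : ∑ j, ∑ k, (starRingEnd ℂ) ((starRingEnd ℂ) (x j)
          * ((G.dist j k : ℂ) * x j - ψ j k * (G.dist j k : ℂ) * x k)) = 0 := by
        simp only [← map_sum]
        rw [hDf, map_zero]
      have hterm : ∀ j k : Fin n, (G.dist j k : ℂ)
            * ((x j - ψ j k * x k) * (starRingEnd ℂ) (x j - ψ j k * x k))
          = ((starRingEnd ℂ) (x j)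
              * ((G.dist j k : ℂ) * x j - ψ j k * (G.dist j k : ℂ) * x k)
            + (starRingEnd ℂ) ((starRingEnd ℂ) (x j)
              * ((G.dist j k : ℂ) * x j - ψ j k * (G.dist j k : ℂ) * x k)))
            + ((G.dist j k : ℂ) * (x k * (starRingEnd ℂ) (x k))
              - (G.dist j k : ℂ) * (x j * (starRingEnd ℂ) (x j))) := by
        intro j k
        have hd : (G.dist j k : ℂ) * (ψ j k * (starRingEnd ℂ) (ψ j k))
            = (G.dist j k : ℂ) := by
          rcases eq_or_ne j k with rfl | hne
          · simp [SimpleGraph.dist_self]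
          · rw [Complex.mul_conj, hψ1 j k hne]
            simp
        simp only [map_sub, _root_.map_mul, Complex.conj_conj, Complex.conj_natCast]
        linear_combination (x k * (starRingEnd ℂ) (x k)) * hd
      have hswap : ∑ j : Fin n, ∑ k : Fin n, (G.dist j k : ℂ) * (x k * (starRingEnd ℂ) (x k))
          = ∑ j : Fin n, ∑ k : Fin n, (G.dist j k : ℂ) * (x j * (starRingEnd ℂ) (x j)) := by
        have hc : ∀ j k : Fin n, ((G.dist j k : ℕ) : ℂ) = ((G.dist k j : ℕ) : ℂ) :=
          fun j k => by rw [SimpleGraph.dist_comm]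
        calc ∑ j : Fin n, ∑ k : Fin n, (G.dist j k : ℂ) * (x k * (starRingEnd ℂ) (x k))
            = ∑ j : Fin n, ∑ k : Fin n, (G.dist k j : ℂ) * (x k * (starRingEnd ℂ) (x k)) := by
              exact Finset.sum_congr rfl fun j _ => Finset.sum_congr rfl fun k _ => by
                rw [hc j k]
          _ = ∑ k : Fin n, ∑ j : Fin n, (G.dist k j : ℂ) * (x k * (starRingEnd ℂ) (x k)) :=
              Finset.sum_comm
      have hsum : ∑ j, ∑ k, (G.dist j k : ℂ)
          * ((x j - ψ j k * x k) * (starRingEnd ℂ) (x j - ψ j k * x k)) = 0 := by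
        rw [Finset.sum_congr rfl (fun j _ => Finset.sum_congr rfl (fun k _ => hterm j k))]
        simp only [Finset.sum_add_distrib, Finset.sum_sub_distrib]
        rw [hDf, hDfc, hswap]
        ring
      have hreal : ∑ j : Fin n, ∑ k : Fin n,
          (G.dist j k : ℝ) * Complex.normSq (x j - ψ j k * x k) = 0 := by
        have hcast : ((∑ j : Fin n, ∑ k : Fin n,
            (G.dist j k : ℝ) * Complex.normSq (x j - ψ j k * x k) : ℝ) : ℂ) = 0 := by
          push_cast
          rw [← hsum]
          exact Finset.sum_congr rfl fun j _ => Finset.sum_congr rfl fun k _ => by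
            rw [Complex.mul_conj]
        exact_mod_cast hcast
      have hnonneg : ∀ j ∈ Finset.univ, ∀ k ∈ Finset.univ,
          (0:ℝ) ≤ (G.dist j k : ℝ) * Complex.normSq (x j - ψ j k * x k) :=
        fun j _ k _ => mul_nonneg (Nat.cast_nonneg _) (Complex.normSq_nonneg _)
      have hterm0 : (G.dist j k : ℝ) * Complex.normSq (x j - ψ j k * x k) = 0 := by
        have houter := (Finset.sum_eq_zero_iff_of_nonneg
          (fun j _ => Finset.sum_nonneg (fun k _ => hnonneg j (Finset.mem_univ j) k (Finset.mem_univ k)))).mp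
          hreal j (Finset.mem_univ j)
        exact (Finset.sum_eq_zero_iff_of_nonneg
          (fun k _ => hnonneg j (Finset.mem_univ j) k (Finset.mem_univ k))).mp houter k
          (Finset.mem_univ k)
      have hd0 : (G.dist j k : ℝ) ≠ 0 := by
        rw [Nat.cast_ne_zero]
        exact SimpleGraph.dist_ne_zero_iff_ne_and_reachable.mpr
          ⟨ne_of_lt hjk, hconn.preconnected j k⟩
      have hz := (mul_eq_zero.mp hterm0).resolve_left hd0
      exact sub_eq_zero.mp (Complex.normSq_eq_zero.mp hz)
    · intro hrel
      funext j
      rw [hMv]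
      simp only [Pi.zero_apply]
      apply Finset.sum_eq_zero
      intro k _
      rcases lt_trichotomy j k with h | h | h
      · rw [hrel j k h]; ring
      · subst h; simp [SimpleGraph.dist_self]
      · have hkj := hrel k j h
        rw [hkj, hψc k j]
        have h1 : ψ k j * (starRingEnd ℂ) (ψ k j) = 1 := by
          rw [Complex.mul_conj, hψ1 k j (ne_of_lt h)]
          simp
        linear_combination (-(G.dist j k : ℂ) * x j) * h1
  -- rank-nullity
  have hrank : M.rank + Module.finrank ℂ (LinearMap.ker M.mulVecLin) = n := by
    have h := LinearMap.finrank_range_add_finrank_ker M.mulVecLin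
    rwa [Module.finrank_fintype_fun_eq_card, Fintype.card_fin] at h
  constructor
  · -- balanced case
    intro hbal
    obtain ⟨η, hηabs, hηval⟩ := hψbal hbal
    set y : Fin n → ℂ := fun v => (starRingEnd ℂ) (η v) with hy
    set i0 : Fin n := ⟨0, hnpos⟩ with hi0
    have hy0 : y ≠ 0 := by
      intro h
      have h' := congrFun h i0
      simp only [hy, Pi.zero_apply, map_eq_zero] at h'
      have := hηabs i0
      rw [h'] at this
      simp at this
    have hker : LinearMap.ker M.mulVecLin = Submodule.span ℂ {y} := by
      apply le_antisymm
      · intro x hx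
        rw [LinearMap.mem_ker, Matrix.mulVecLin_apply] at hx
        have hrel := (key x).mp hx
        rw [Submodule.mem_span_singleton]
        refine ⟨x i0 * η i0, ?_⟩
        funext v
        simp only [Pi.smul_apply, smul_eq_mul, hy]
        rcases eq_or_lt_of_le (show i0 ≤ v by simp [Fin.le_def, hi0]) with heq | hlt
        · rw [← heq]
          have h1 := mul_conj_eq_one (hηabs i0)
          linear_combination (x i0) * h1
        · have hr := hrel i0 v hlt
          rw [hηval i0 v hlt] at hr
          have h1 := mul_conj_eq_one (hηabs i0)
          have h2 := mul_conj_eq_one (hηabs v)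
          linear_combination (η i0 * (starRingEnd ℂ) (η v)) * hr
            + (x v * (η v * (starRingEnd ℂ) (η v))) * h1 + (x v) * h2
      · rw [Submodule.span_le, Set.singleton_subset_iff, SetLike.mem_coe,
          LinearMap.mem_ker, Matrix.mulVecLin_apply]
        apply (key y).mpr
        intro j k hjk
        rw [hηval j k hjk]
        have h2 := mul_conj_eq_one (hηabs k)
        simp only [hy]
        linear_combination (-(starRingEnd ℂ) (η j)) * h2
    have hfr : Module.finrank ℂ (LinearMap.ker M.mulVecLin) = 1 := by
      rw [hker]
      exact finrank_span_singleton hy0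
    omega
  · -- unbalanced case
    intro hunbal
    have hker : LinearMap.ker M.mulVecLin = ⊥ := by
      rw [eq_bot_iff]
      intro x hx
      rw [LinearMap.mem_ker, Matrix.mulVecLin_apply] at hx
      have hrel := (key x).mp hx
      rw [Submodule.mem_bot]
      by_contra hx0
      apply hunbal
      have hadjrel : ∀ a b : Fin n, G.Adj a b → x a = φ a b * x b := by
        intro a b hab
        rcases lt_trichotomy a b with h | h | h
        · rw [hrel a b h, hψadj a b hab h]
        · subst h; exact (G.irrefl hab).elim
        · have hba := hrel b a h
          rw [hψadj b a hab.symm h] at hba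
          have hne : φ a b ≠ 0 := by
            intro h0
            have := hφ1 a b hab
            rw [h0] at this
            simp at this
          rw [hba, hφ2 a b hab, ← mul_assoc, mul_inv_cancel₀ hne, one_mul]
      have hwalk : ∀ (a b : Fin n) (p : G.Walk a b), walkGain φ p * x b = x a := by
        intro a b p
        induction p with
        | nil => simp [walkGain]
        | @cons a y b h q ih =>
          simp only [walkGain]
          rw [mul_assoc, ih, ← hadjrel a y h]
      obtain ⟨v0, hv0⟩ := Function.ne_iff.mp hx0
      have hnz : ∀ u : Fin n, x u ≠ 0 := by
        intro u
        obtain ⟨p⟩ := hconn.preconnected u v0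
        rw [← hwalk u v0 p]
        have hg : walkGain φ p ≠ 0 := by
          intro h0
          have := abs_walkGain hφ1 p
          rw [h0] at this
          simp at this
        exact mul_ne_zero hg hv0
      intro u c _
      have hc := hwalk u u c
      have : walkGain φ c * x u = 1 * x u := by rw [hc, one_mul]
      exact mul_right_cancel₀ (hnz u) this
    have hfr : Module.finrank ℂ (LinearMap.ker M.mulVecLin) = 0 := by
      rw [hker]
      exact finrank_bot ℂ (Fin n → ℂ)
    omega

section Aux4

variable {n : ℕ} {G : SimpleGraph (Fin n)} {φ : Fin n → Fin n → ℂ}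

lemma phiMax_conj (u v : Fin n) :
    phiMax G φ v u = (starRingEnd ℂ) (phiMax G φ u v) := by
  rcases lt_trichotomy u v with h | h | h
  · rw [phiMax, phiMax, if_neg (ne_of_gt h), if_neg (asymm h),
      if_neg (ne_of_lt h), if_pos h]
  · subst h; simp [phiMax]
  · rw [phiMax, phiMax, if_neg (ne_of_lt h), if_pos h, if_neg (ne_of_gt h),
      if_neg (asymm h), Complex.conj_conj]

lemma phiMin_conj (u v : Fin n) :
    phiMin G φ v u = (starRingEnd ℂ) (phiMin G φ u v) := by
  rcases lt_trichotomy u v with h | h | h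
  · rw [phiMin, phiMin, if_neg (ne_of_gt h), if_neg (asymm h),
      if_neg (ne_of_lt h), if_pos h]
  · subst h; simp [phiMin]
  · rw [phiMin, phiMin, if_neg (ne_of_lt h), if_pos h, if_neg (ne_of_gt h),
      if_neg (asymm h), Complex.conj_conj]

lemma phiMax_normSq (hconn : G.Connected)
    (hφ1 : ∀ i j, G.Adj i j → ‖φ i j‖ = 1)
    (u v : Fin n) (h : u ≠ v) : Complex.normSq (phiMax G φ u v) = 1 := by
  rcases lt_or_gt_of_ne h with hlt | hgt
  · rw [phiMax, if_neg h, if_pos hlt]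
    exact normSq_eq_one_of_mem_gainSet hφ1 (phiMaxAux_mem hconn u v)
  · rw [phiMax, if_neg h, if_neg (asymm hgt), Complex.normSq_conj]
    exact normSq_eq_one_of_mem_gainSet hφ1 (phiMaxAux_mem hconn v u)

lemma phiMin_normSq (hconn : G.Connected)
    (hφ1 : ∀ i j, G.Adj i j → ‖φ i j‖ = 1)
    (u v : Fin n) (h : u ≠ v) : Complex.normSq (phiMin G φ u v) = 1 := by
  rcases lt_or_gt_of_ne h with hlt | hgt
  · rw [phiMin, if_neg h, if_pos hlt]
    exact normSq_eq_one_of_mem_gainSet hφ1 (phiMinAux_mem hconn u v)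
  · rw [phiMin, if_neg h, if_neg (asymm hgt), Complex.normSq_conj]
    exact normSq_eq_one_of_mem_gainSet hφ1 (phiMinAux_mem hconn v u)

lemma phiMax_adj (u v : Fin n) (hadj : G.Adj u v) (hlt : u < v) :
    phiMax G φ u v = φ u v := by
  rw [phiMax, if_neg hadj.ne, if_pos hlt]
  exact phiMaxAux_eq_of_singleton (gainSet_adj hadj)

lemma phiMin_adj (u v : Fin n) (hadj : G.Adj u v) (hlt : u < v) :
    phiMin G φ u v = φ u v := by
  rw [phiMin, if_neg hadj.ne, if_pos hlt]
  exact phiMinAux_eq_of_singleton (gainSet_adj hadj)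

lemma phiMax_bal {η : Fin n → ℂ}
    (hηval : ∀ u v : Fin n, gainSet G φ u v = {(starRingEnd ℂ) (η u) * η v})
    (u v : Fin n) (hlt : u < v) :
    phiMax G φ u v = (starRingEnd ℂ) (η u) * η v := by
  rw [phiMax, if_neg (ne_of_lt hlt), if_pos hlt]
  exact phiMaxAux_eq_of_singleton (hηval u v)

lemma phiMin_bal {η : Fin n → ℂ}
    (hηval : ∀ u v : Fin n, gainSet G φ u v = {(starRingEnd ℂ) (η u) * η v})
    (u v : Fin n) (hlt : u < v) :
    phiMin G φ u v = (starRingEnd ℂ) (η u) * η v := by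
  rw [phiMin, if_neg (ne_of_lt hlt), if_pos hlt]
  exact phiMinAux_eq_of_singleton (hηval u v)

end Aux4

/-- For a connected complex unit gain graph on n vertices, the gain distance
Laplacian matrices have rank n-1 when the graph is balanced, and rank n otherwise. -/
theorem rank_gain_distance_laplacian {n : ℕ}
    (G : SimpleGraph (Fin n)) (φ : Fin n → Fin n → ℂ)
    (hconn : G.Connected)
    (hφ1 : ∀ i j, G.Adj i j → ‖φ i j‖ = 1)
    (hφ2 : ∀ i j, G.Adj i j → φ j i = (φ i j)⁻¹) :
    (IsBalanced G φ → (DLmax G φ).rank = n - 1 ∧ (DLmin G φ).rank = n - 1) ∧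
    (¬ IsBalanced G φ → (DLmax G φ).rank = n ∧ (DLmin G φ).rank = n) := by
  have hbalmax : IsBalanced G φ → ∃ η : Fin n → ℂ, (∀ v, ‖η v‖ = 1) ∧
      ∀ u v : Fin n, u < v → phiMax G φ u v = (starRingEnd ℂ) (η u) * η v := by
    intro hbal
    obtain ⟨η, habs, hval⟩ := balanced_potential hconn hφ1 hφ2 hbal
    exact ⟨η, habs, fun u v hlt => phiMax_bal hval u v hlt⟩
  have hbalmin : IsBalanced G φ → ∃ η : Fin n → ℂ, (∀ v, ‖η v‖ = 1) ∧
      ∀ u v : Fin n, u < v → phiMin G φ u v = (starRingEnd ℂ) (η u) * η v := by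
    intro hbal
    obtain ⟨η, habs, hval⟩ := balanced_potential hconn hφ1 hφ2 hbal
    exact ⟨η, habs, fun u v hlt => phiMin_bal hval u v hlt⟩
  have hmax := master hconn hφ1 hφ2 (phiMax G φ) (DLmax G φ)
    (fun s t => by simp [DLmax, Dmax, TrM, Matrix.sub_apply])
    phiMax_conj (phiMax_normSq hconn hφ1) phiMax_adj hbalmax
  have hmin := master hconn hφ1 hφ2 (phiMin G φ) (DLmin G φ)
    (fun s t => by simp [DLmin, Dmin, TrM, Matrix.sub_apply])
    phiMin_conj (phiMin_normSq hconn hφ1) phiMin_adj hbalmin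
  exact ⟨fun hbal => ⟨hmax.1 hbal, hmin.1 hbal⟩,
    fun hunbal => ⟨hmax.2 hunbal, hmin.2 hunbal⟩⟩
end
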